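/- Let q : ℝ^d × ℝ → ℝ be continuously differentiable and strictly positive, let f : ℝ^d × ℝ → ℝ^d be continuously differentiable, and suppose q satisfies the continuity equation ∂q/∂t(x,t) = −div_x(q(x,t)·f(x,t)) for all (x,t). If x : ℝ → ℝ^d is differentiable with x'(t) = f(x(t), t) for all t, then for every T ≥ 0, log q(x(T), T) = log q(x(0), 0) − ∫₀ᵀ (div_x f)(x(t), t) dt. -/

import Mathlib

/-!
Along a trajectory, `d/dt q(x(t), t) = ∂ₜq + D_x q · f`, while the product rule gives
`div_x (q f) = D_x q · f + q div_x f`. Hence the continuity equation turns the derivative of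
`q(x(t), t)` into `-q · div_x f`, so `log q(x(t), t)` has derivative `-div_x f (x(t), t)`, and the
formula is the fundamental theorem of calculus.
-/

/-- Divergence in the spatial variable of a time-dependent vector field on ℝ^d:
`div_x v (x, t) = Σᵢ ∂vᵢ/∂xᵢ (x, t)`. -/
noncomputable def spatialDiv {d : ℕ} (v : (Fin d → ℝ) × ℝ → (Fin d → ℝ))
    (x : Fin d → ℝ) (t : ℝ) : ℝ :=
  ∑ i, fderiv ℝ (fun y : Fin d → ℝ => v (y, t) i) x (Pi.single i 1)

section

variable {𝕜 E F : Type*} [NontriviallyNormedField 𝕜] [NormedAddCommGroup E] [NormedSpace 𝕜 E]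
  [NormedAddCommGroup F] [NormedSpace 𝕜 F]

theorem fderiv_prod_apply_eq_add_partials {g : E × 𝕜 → F} {y : E} {t : 𝕜}
    (hg : DifferentiableAt 𝕜 g (y, t)) (v : E) (s : 𝕜) :
    fderiv 𝕜 g (y, t) (v, s)
      = fderiv 𝕜 (fun z => g (z, t)) y v + s • deriv (fun r => g (y, r)) t := by
  have hleft : HasFDerivAt (fun z => g (z, t))
      ((fderiv 𝕜 g (y, t)).comp (ContinuousLinearMap.inl 𝕜 E 𝕜)) y :=
    hg.hasFDerivAt.comp y (hasFDerivAt_prodMk_left y t)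
  have hright : HasDerivAt (fun r => g (y, r))
      ((fderiv 𝕜 g (y, t)).comp (ContinuousLinearMap.inr 𝕜 E 𝕜) 1) t :=
    (hg.hasFDerivAt.comp t (hasFDerivAt_prodMk_right y t)).hasDerivAt
  rw [hleft.fderiv, hright.deriv, ContinuousLinearMap.comp_apply, ContinuousLinearMap.comp_apply,
    ← map_smul, ← map_add]
  simp

end

theorem ContinuousLinearMap.apply_eq_sum_smul_single {ι R F : Type*} [Fintype ι] [DecidableEq ι]
    [Semiring R] [TopologicalSpace R] [AddCommMonoid F] [Module R F] [TopologicalSpace F]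
    (L : (ι → R) →L[R] F) (v : ι → R) :
    L v = ∑ i, v i • L (Pi.single i 1) := by
  conv_lhs => rw [← Finset.univ_sum_single v, map_sum]
  refine Finset.sum_congr rfl fun i _ => ?_
  rw [← map_smul, ← Pi.single_smul, smul_eq_mul, mul_one]

variable {d : ℕ}

theorem spatialDiv_eq_sum_fderiv {v : (Fin d → ℝ) × ℝ → (Fin d → ℝ)} {y : Fin d → ℝ} {t : ℝ}
    (hv : ∀ i, DifferentiableAt ℝ (fun p => v p i) (y, t)) :
    spatialDiv v y t = ∑ i, fderiv ℝ (fun p => v p i) (y, t) (Pi.single i 1, 0) := by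
  simp only [spatialDiv, fderiv_prod_apply_eq_add_partials (hv _), zero_smul, add_zero]

theorem continuous_spatialDiv {v : (Fin d → ℝ) × ℝ → (Fin d → ℝ)} (hv : ContDiff ℝ 1 v) :
    Continuous fun p : (Fin d → ℝ) × ℝ => spatialDiv v p.1 p.2 := by
  have hvi := contDiff_pi.1 hv
  simp only [spatialDiv_eq_sum_fderiv fun i => (hvi i).differentiable one_ne_zero _]
  exact continuous_finsetSum _ fun i _ =>
    ((hvi i).continuous_fderiv one_ne_zero).clm_apply continuous_const

theorem spatialDiv_smul {q : (Fin d → ℝ) × ℝ → ℝ} {v : (Fin d → ℝ) × ℝ → (Fin d → ℝ)}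
    {y : Fin d → ℝ} {t : ℝ} (hq : DifferentiableAt ℝ q (y, t))
    (hv : DifferentiableAt ℝ v (y, t)) :
    spatialDiv (fun p => q p • v p) y t
      = fderiv ℝ (fun z => q (z, t)) y (v (y, t)) + q (y, t) * spatialDiv v y t := by
  have hqy : DifferentiableAt ℝ (fun z => q (z, t)) y :=
    hq.comp y (differentiableAt_id.prodMk (differentiableAt_const t))
  have hvy : ∀ i, DifferentiableAt ℝ (fun z => v (z, t) i) y := differentiableAt_pi.1
    (hv.comp y (differentiableAt_id.prodMk (differentiableAt_const t)))
  simp only [spatialDiv, Pi.smul_apply, smul_eq_mul, fderiv_fun_mul hqy (hvy _),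
    add_apply, smul_apply, Finset.sum_add_distrib, ← Finset.mul_sum]
  rw [ContinuousLinearMap.apply_eq_sum_smul_single (fderiv ℝ (fun z => q (z, t)) y), add_comm]
  simp only [smul_eq_mul]

theorem hasDerivAt_comp_trajectory_of_continuity_eq {q : (Fin d → ℝ) × ℝ → ℝ}
    {f : (Fin d → ℝ) × ℝ → (Fin d → ℝ)} {x : ℝ → (Fin d → ℝ)} {t : ℝ}
    (hq : DifferentiableAt ℝ q (x t, t)) (hf : DifferentiableAt ℝ f (x t, t))
    (hcont : deriv (fun s => q (x t, s)) t = -spatialDiv (fun p => q p • f p) (x t) t)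
    (hx : HasDerivAt x (f (x t, t)) t) :
    HasDerivAt (fun s => q (x s, s)) (-(q (x t, t) * spatialDiv f (x t) t)) t := by
  have hchain : HasDerivAt (fun s => q (x s, s)) (fderiv ℝ q (x t, t) (f (x t, t), 1)) t :=
    hq.hasFDerivAt.comp_hasDerivAt (f := fun s => (x s, s)) t (hx.prodMk (hasDerivAt_id t))
  convert hchain using 1
  rw [fderiv_prod_apply_eq_add_partials hq, one_smul, hcont, spatialDiv_smul hq hf]
  ring

theorem hasDerivAt_log_comp_trajectory_of_continuity_eq {q : (Fin d → ℝ) × ℝ → ℝ}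
    {f : (Fin d → ℝ) × ℝ → (Fin d → ℝ)} {x : ℝ → (Fin d → ℝ)} {t : ℝ}
    (hq : DifferentiableAt ℝ q (x t, t)) (hq0 : q (x t, t) ≠ 0)
    (hf : DifferentiableAt ℝ f (x t, t))
    (hcont : deriv (fun s => q (x t, s)) t = -spatialDiv (fun p => q p • f p) (x t) t)
    (hx : HasDerivAt x (f (x t, t)) t) :
    HasDerivAt (fun s => Real.log (q (x s, s))) (-spatialDiv f (x t) t) t := by
  convert (hasDerivAt_comp_trajectory_of_continuity_eq hq hf hcont hx).log hq0 using 1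
  field_simp

/-- If a strictly positive `C¹` density `q` satisfies the continuity equation
`∂q/∂t = −div_x (q f)` for a `C¹` velocity field `f`, and `x(·)` is a trajectory of the flow,
then for every `T ≥ 0`,
`log q(x(T), T) = log q(x(0), 0) − ∫₀ᵀ (div_x f)(x(t), t) dt`. -/
theorem log_density_integral_formula {d : ℕ}
    (q : (Fin d → ℝ) × ℝ → ℝ) (f : (Fin d → ℝ) × ℝ → (Fin d → ℝ))
    (hq : ContDiff ℝ 1 q) (hqpos : ∀ p, 0 < q p)
    (hf : ContDiff ℝ 1 f)
    (hcont : ∀ (x : Fin d → ℝ) (t : ℝ),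
      deriv (fun s => q (x, s)) t
        = -(spatialDiv (fun p => q p • f p) x t))
    (x : ℝ → (Fin d → ℝ)) (hx : ∀ t, HasDerivAt x (f (x t, t)) t) :
    ∀ T : ℝ, 0 ≤ T →
      Real.log (q (x T, T))
        = Real.log (q (x 0, 0)) - ∫ t in (0 : ℝ)..T, spatialDiv f (x t) t := by
  intro T _
  have hlog (t : ℝ) := hasDerivAt_log_comp_trajectory_of_continuity_eq
    (hq.differentiable one_ne_zero _) (hqpos _).ne' (hf.differentiable one_ne_zero _)
    (hcont (x t) t) (hx t)
  have hx_cont : Continuous x := continuous_iff_continuousAt.2 fun t => (hx t).continuousAt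
  have hdiv_cont : Continuous fun t => spatialDiv f (x t) t :=
    (continuous_spatialDiv hf).comp (hx_cont.prodMk continuous_id)
  have hftc := intervalIntegral.integral_eq_sub_of_hasDerivAt (fun t _ => hlog t)
    (hdiv_cont.neg.intervalIntegrable 0 T)
  rw [intervalIntegral.integral_neg] at hftc
  linarith
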